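/- Let u₀ : ℝ³ → ℝ³ be measurable with ‖u₀‖_{E²_q} < ∞. If 2 ≤ q ≤ 3, then lim_{R→∞} N⁰_R(u₀) = 0, where N⁰_R(u₀) := sup_{x₀∈ℝ³} R⁻¹ ∫_{B_R(x₀)} |u₀|² dx. If 2 ≤ q ≤ 6, then lim_{R→∞} R⁻¹ N⁰_{q,R}(u₀) = 0, where N⁰_{q,R}(u₀) := R⁻¹ (∑_{k∈ℤ³} (∫_{B_R(Rk)} |u₀|² dx)^{q/2})^{2/q}. -/

import Mathlib

open MeasureTheory Filter Metric Set
open scoped ENNReal NNReal Topology Real BigOperators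

noncomputable section

abbrev E3 : Type := EuclideanSpace ℝ (Fin 3)

/-- A lattice point of `ℤ³` viewed as a point of `ℝ³`. -/
def zc (k : Fin 3 → ℤ) : E3 := WithLp.toLp 2 (fun i => (k i : ℝ))

/-- The `E²_q` (Wiener amalgam) norm. -/
def e2qNorm (q : ℝ) (f : E3 → E3) : ℝ≥0∞ :=
  (∑' k : Fin 3 → ℤ, (∫⁻ x in ball (zc k) 1, (‖f x‖₊ : ℝ≥0∞) ^ 2) ^ (q/2)) ^ (1/q)

/-- `A_{0,q}(R) = ‖(∫_{B_R(Rk)} |u₀|²)_k‖_{ℓ^{q/2}}`. -/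
def A0q (q R : ℝ) (u₀ : E3 → E3) : ℝ≥0∞ :=
  (∑' k : Fin 3 → ℤ, (∫⁻ x in ball (R • zc k) R, (‖u₀ x‖₊ : ℝ≥0∞) ^ 2) ^ (q/2)) ^ (2/q)

/-- `N⁰_R(u₀) = sup_{x₀} R⁻¹ ∫_{B_R(x₀)} |u₀|²`. -/
def N0R (u₀ : E3 → E3) (R : ℝ) : ℝ≥0∞ :=
  ⨆ x₀ : E3, (ENNReal.ofReal R)⁻¹ * ∫⁻ x in ball x₀ R, (‖u₀ x‖₊ : ℝ≥0∞) ^ 2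

/-- `N⁰_{q,R}(u₀) = R⁻¹ A_{0,q}(R)`. -/
def N0q (q R : ℝ) (u₀ : E3 → E3) : ℝ≥0∞ := (ENNReal.ofReal R)⁻¹ * A0q q R u₀

lemma coord_abs_le_norm (y : E3) (i : Fin 3) : |y i| ≤ ‖y‖ := by
  rw [EuclideanSpace.norm_eq]
  have h1 : |y i| = Real.sqrt (‖y i‖ ^ 2) := by
    rw [Real.sqrt_sq_eq_abs, Real.norm_eq_abs, abs_abs]
  rw [h1]
  apply Real.sqrt_le_sqrt
  exact Finset.single_le_sum (f := fun j => ‖y j‖ ^ 2) (fun j _ => by positivity) (Finset.mem_univ i)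

lemma norm_le_of_coords (y : E3) {m : ℝ} (hm : 0 ≤ m) (h : ∀ i, |y i| ≤ m) :
    ‖y‖ ≤ m * Real.sqrt 3 := by
  rw [EuclideanSpace.norm_eq]
  have : ∑ i, ‖y i‖ ^ 2 ≤ ∑ _i : Fin 3, m ^ 2 := by
    apply Finset.sum_le_sum
    intro i _
    rw [Real.norm_eq_abs]
    have := h i
    nlinarith [abs_nonneg (y i)]
  calc Real.sqrt (∑ i, ‖y i‖ ^ 2) ≤ Real.sqrt (∑ _i : Fin 3, m ^ 2) := Real.sqrt_le_sqrt this
    _ = Real.sqrt (m ^ 2 * 3) := by rw [Finset.sum_const]; norm_num; ring_nf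
    _ = m * Real.sqrt 3 := by
        rw [Real.sqrt_mul (by positivity), Real.sqrt_sq hm]

/-- the covering finset -/
def cov (c : E3) (ρ : ℝ) : Finset (Fin 3 → ℤ) :=
  Fintype.piFinset fun i => Finset.Icc ⌈c i - ρ⌉ ⌊c i + ρ⌋

lemma mem_cov_of {c : E3} {ρ : ℝ} {k : Fin 3 → ℤ} (h : ∀ i, |(k i : ℝ) - c i| ≤ ρ) :
    k ∈ cov c ρ := by
  rw [cov, Fintype.mem_piFinset]
  intro i
  rw [Finset.mem_Icc, Int.ceil_le, Int.le_floor]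
  have := abs_le.1 (h i)
  constructor <;> push_cast <;> linarith [this.1, this.2]

lemma abs_le_of_mem_cov {c : E3} {ρ : ℝ} {k : Fin 3 → ℤ} (h : k ∈ cov c ρ) (i : Fin 3) :
    |(k i : ℝ) - c i| ≤ ρ + 1 := by
  rw [cov, Fintype.mem_piFinset] at h
  have h2 := (Finset.mem_Icc.1 (h i))
  have l1 : (⌈c i - ρ⌉ : ℝ) ≥ c i - ρ := Int.le_ceil _
  have l2 : (⌊c i + ρ⌋ : ℝ) ≤ c i + ρ := Int.floor_le _
  have h3 : ((⌈c i - ρ⌉ : ℤ) : ℝ) ≤ (k i : ℝ) := by exact_mod_cast h2.1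
  have h4 : ((k i : ℤ) : ℝ) ≤ ((⌊c i + ρ⌋ : ℤ) : ℝ) := by exact_mod_cast h2.2
  rw [abs_le]
  constructor <;> linarith

lemma Icc_card_le_real (a b : ℤ) {m : ℝ} (hm : 0 ≤ m) (h : (b : ℝ) + 1 - (a : ℝ) ≤ m) :
    ((Finset.Icc a b).card : ℝ) ≤ m := by
  rw [Int.card_Icc]
  rcases le_or_gt (b + 1 - a) 0 with hle | hlt
  · rw [Int.toNat_of_nonpos hle]; simpa
  · have : ((b + 1 - a).toNat : ℤ) = b + 1 - a := Int.toNat_of_nonneg hlt.le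
    have : ((b + 1 - a).toNat : ℝ) = (b : ℝ) + 1 - a := by exact_mod_cast this
    rw [this]; exact h

lemma cov_card_le (c : E3) {ρ m : ℝ} (hm : 0 ≤ m) (h : 2 * ρ + 1 ≤ m) :
    ((cov c ρ).card : ℝ) ≤ m ^ 3 := by
  rw [cov, Fintype.card_piFinset]
  push_cast
  have : ∀ i : Fin 3, ((Finset.Icc ⌈c i - ρ⌉ ⌊c i + ρ⌋).card : ℝ) ≤ m := by
    intro i
    apply Icc_card_le_real _ _ hm
    have l1 : (⌈c i - ρ⌉ : ℝ) ≥ c i - ρ := Int.le_ceil _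
    have l2 : (⌊c i + ρ⌋ : ℝ) ≤ c i + ρ := Int.floor_le _
    linarith
  calc (∏ i : Fin 3, ((Finset.Icc ⌈c i - ρ⌉ ⌊c i + ρ⌋).card : ℝ))
      ≤ ∏ _i : Fin 3, m := Finset.prod_le_prod (fun i _ => by positivity) (fun i _ => this i)
    _ = m ^ 3 := by simp [Finset.prod_const]

lemma norm_sub_round_lt (x : E3) : ‖x - zc (fun i => round (x i))‖ < 1 := by
  have h : ∀ i : Fin 3, |(x - zc (fun i => round (x i))) i| ≤ 1/2 := by
    intro i
    have : (x - zc (fun i => round (x i))) i = x i - (round (x i) : ℝ) := by simp [zc]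
    rw [this]
    exact abs_sub_round (x i)
  have := norm_le_of_coords _ (by norm_num) h
  calc ‖x - zc (fun i => round (x i))‖ ≤ 1/2 * Real.sqrt 3 := this
    _ < 1 := by
        nlinarith [Real.sq_sqrt (by norm_num : (3:ℝ) ≥ 0), Real.sqrt_nonneg 3]

lemma ball_subset_cov {c : E3} {R : ℝ} {x : E3} (hx : x ∈ ball c R) :
    ∃ k ∈ cov c (R + 1), x ∈ ball (zc k) 1 := by
  refine ⟨fun i => round (x i), ?_, ?_⟩
  · apply mem_cov_of
    intro i
    have h1 : |(round (x i) : ℝ) - x i| ≤ 1/2 := by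
      rw [abs_sub_comm]; exact abs_sub_round (x i)
    have h2 : |x i - c i| ≤ ‖x - c‖ := by
      have : (x - c) i = x i - c i := rfl
      rw [← this]; exact coord_abs_le_norm _ i
    have h3 : ‖x - c‖ < R := by rwa [mem_ball, dist_eq_norm] at hx
    calc |(round (x i) : ℝ) - c i| ≤ |(round (x i) : ℝ) - x i| + |x i - c i| := abs_sub_le _ _ _
      _ ≤ 1/2 + ‖x - c‖ := by linarith
      _ ≤ R + 1 := by linarith
  · rw [mem_ball, dist_eq_norm]
    exact norm_sub_round_lt x

lemma lintegral_ball_le (f : E3 → ℝ≥0∞) (c : E3) (R : ℝ) :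
    ∫⁻ x in ball c R, f x ≤ ∑ k ∈ cov c (R + 1), ∫⁻ x in ball (zc k) 1, f x := by
  have hsub : ball c R ⊆ ⋃ k : {k // k ∈ cov c (R + 1)}, ball (zc k.1) 1 := by
    intro x hx
    obtain ⟨k, hk, hxk⟩ := ball_subset_cov hx
    exact Set.mem_iUnion.2 ⟨⟨k, hk⟩, hxk⟩
  calc ∫⁻ x in ball c R, f x ≤ ∫⁻ x in ⋃ k : {k // k ∈ cov c (R + 1)}, ball (zc k.1) 1, f x :=
        lintegral_mono_set hsub
    _ ≤ ∑' k : {k // k ∈ cov c (R + 1)}, ∫⁻ x in ball (zc k.1) 1, f x :=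
        lintegral_iUnion_le _ _
    _ = ∑ k ∈ cov c (R + 1), ∫⁻ x in ball (zc k) 1, f x := by
        exact Finset.tsum_subtype (cov c (R + 1)) (fun k => ∫⁻ x in ball (zc k) 1, f x)

/-- the multiplicity finset: lattice points `k` such that `j` can lie in `cov (R • zc k) (R+1)`. -/
def mult (R : ℝ) (j : Fin 3 → ℤ) : Finset (Fin 3 → ℤ) :=
  Fintype.piFinset fun i => Finset.Icc ⌈(j i : ℝ) / R - 3⌉ ⌊(j i : ℝ) / R + 3⌋

lemma mem_mult_of_mem_cov {R : ℝ} (hR : 1 ≤ R) {j k : Fin 3 → ℤ}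
    (h : j ∈ cov (R • zc k) (R + 1)) : k ∈ mult R j := by
  rw [mult, Fintype.mem_piFinset]
  intro i
  have hc : (R • zc k) i = R * (k i : ℝ) := by simp [zc]
  have h1 : |(j i : ℝ) - R * (k i : ℝ)| ≤ (R + 1) + 1 := by
    have := abs_le_of_mem_cov h i
    rwa [hc] at this
  have hR0 : (0:ℝ) < R := by linarith
  have h2 : |(j i : ℝ) / R - (k i : ℝ)| ≤ 3 := by
    have he : (j i : ℝ) / R - (k i : ℝ) = ((j i : ℝ) - R * (k i : ℝ)) / R := by
      field_simp
    rw [he, abs_div, abs_of_pos hR0, div_le_iff₀ hR0]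
    calc |(j i : ℝ) - R * (k i : ℝ)| ≤ (R + 1) + 1 := h1
      _ ≤ 3 * R := by linarith
  rw [Finset.mem_Icc, Int.ceil_le, Int.le_floor]
  have := abs_le.1 h2
  constructor <;> push_cast <;> linarith [this.1, this.2]

lemma mult_card_le (R : ℝ) (j : Fin 3 → ℤ) : ((mult R j).card : ℝ) ≤ 343 := by
  rw [mult, Fintype.card_piFinset]
  push_cast
  have : ∀ i : Fin 3, ((Finset.Icc ⌈(j i : ℝ) / R - 3⌉ ⌊(j i : ℝ) / R + 3⌋).card : ℝ) ≤ 7 := by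
    intro i
    apply Icc_card_le_real _ _ (by norm_num)
    have l1 : (⌈(j i : ℝ) / R - 3⌉ : ℝ) ≥ (j i : ℝ) / R - 3 := Int.le_ceil _
    have l2 : (⌊(j i : ℝ) / R + 3⌋ : ℝ) ≤ (j i : ℝ) / R + 3 := Int.floor_le _
    linarith
  calc (∏ i : Fin 3, ((Finset.Icc ⌈(j i : ℝ) / R - 3⌉ ⌊(j i : ℝ) / R + 3⌋).card : ℝ))
      ≤ ∏ _i : Fin 3, (7:ℝ) := Finset.prod_le_prod (fun i _ => by positivity) (fun i _ => this i)
    _ ≤ 343 := by norm_num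

/-- `a k` = local L² energy on the unit ball at lattice point `k`. -/
def aInt (u₀ : E3 → E3) (k : Fin 3 → ℤ) : ℝ≥0∞ :=
  ∫⁻ x in ball (zc k) 1, (‖u₀ x‖₊ : ℝ≥0∞) ^ 2

/-- tail of the `ℓ^p` sum of the `a k` outside a finset `F`. -/
def tailSum (a : (Fin 3 → ℤ) → ℝ≥0∞) (p : ℝ) (F : Finset (Fin 3 → ℤ)) : ℝ≥0∞ :=
  ∑' k, Set.indicator {k | k ∉ F} (fun k => a k ^ p) k

lemma tail_small (a : (Fin 3 → ℤ) → ℝ≥0∞) (p : ℝ) (hS : ∑' k, a k ^ p ≠ ⊤)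
    {δ : ℝ≥0∞} (hδ : δ ≠ 0) : ∃ F : Finset (Fin 3 → ℤ), tailSum a p F ≤ δ := by
  have h := ENNReal.tendsto_tsum_compl_atTop_zero (f := fun k => a k ^ p) hS
  rw [ENNReal.tendsto_nhds_zero] at h
  obtain ⟨F, hF⟩ := (h δ hδ.bot_lt).exists
  refine ⟨F, ?_⟩
  calc tailSum a p F = ∑' k : {k : Fin 3 → ℤ // k ∉ F}, a k.1 ^ p := by
        rw [tailSum, ← tsum_subtype {k : Fin 3 → ℤ | k ∉ F} (fun k => a k ^ p)]
        rfl
    _ ≤ δ := hF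

lemma sum_diff_le_tail (a : (Fin 3 → ℤ) → ℝ≥0∞) (p : ℝ) (F K : Finset (Fin 3 → ℤ)) :
    ∑ k ∈ K \ F, a k ^ p ≤ tailSum a p F := by
  rw [tailSum]
  calc ∑ k ∈ K \ F, a k ^ p
      = ∑ k ∈ K \ F, Set.indicator {k : Fin 3 → ℤ | k ∉ F} (fun k => a k ^ p) k :=
      Finset.sum_congr rfl fun k hk => by
        rw [Set.indicator_of_mem]
        exact (Finset.mem_sdiff.1 hk).2
    _ ≤ _ := ENNReal.sum_le_tsum _

lemma split_bound (a : (Fin 3 → ℤ) → ℝ≥0∞) {p : ℝ} (hp1 : 1 ≤ p)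
    (F K : Finset (Fin 3 → ℤ)) :
    ∑ k ∈ K, a k ≤ ∑ k ∈ F, a k +
      ((K.card : ℝ≥0∞)) ^ (1 - p⁻¹) * (∑ k ∈ K \ F, a k ^ p) ^ p⁻¹ := by
  have h1 : ∑ k ∈ K, a k = ∑ k ∈ K ∩ F, a k + ∑ k ∈ K \ F, a k :=
    (Finset.sum_inter_add_sum_sdiff K F a).symm
  have h2 : ∑ k ∈ K ∩ F, a k ≤ ∑ k ∈ F, a k :=
    Finset.sum_le_sum_of_subset Finset.inter_subset_right
  have h3 : ∑ k ∈ K \ F, a k ≤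
      (((K \ F).card : ℝ≥0∞)) ^ (1 - p⁻¹) * (∑ k ∈ K \ F, a k ^ p) ^ p⁻¹ := by
    have := ENNReal.inner_le_weight_mul_Lp_of_nonneg (K \ F) hp1 (fun _ => 1) a
    simpa using this
  have h4 : (((K \ F).card : ℝ≥0∞)) ^ (1 - p⁻¹) ≤ ((K.card : ℝ≥0∞)) ^ (1 - p⁻¹) := by
    apply ENNReal.rpow_le_rpow _ (by simp; exact inv_le_one_of_one_le₀ hp1)
    exact_mod_cast Finset.card_le_card (Finset.sdiff_subset)
  calc ∑ k ∈ K, a k = ∑ k ∈ K ∩ F, a k + ∑ k ∈ K \ F, a k := h1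
    _ ≤ ∑ k ∈ F, a k + ((K.card : ℝ≥0∞)) ^ (1 - p⁻¹) * (∑ k ∈ K \ F, a k ^ p) ^ p⁻¹ :=
        add_le_add h2 (h3.trans (mul_le_mul_left h4 _))

lemma cov_card_ennreal (c : E3) {R : ℝ} (hR : 1 ≤ R) :
    ((cov c (R + 1)).card : ℝ≥0∞) ≤ 125 * (ENNReal.ofReal R) ^ (3 : ℝ) := by
  have h0 : (0:ℝ) ≤ 5 * R := by linarith
  have h1 : ((cov c (R + 1)).card : ℝ) ≤ (5 * R) ^ 3 :=
    cov_card_le c h0 (by linarith)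
  have h2 : ((cov c (R + 1)).card : ℝ≥0∞) = ENNReal.ofReal ((cov c (R + 1)).card : ℝ) := by
    rw [ENNReal.ofReal_natCast]
  rw [h2]
  calc ENNReal.ofReal ((cov c (R + 1)).card : ℝ) ≤ ENNReal.ofReal ((5 * R) ^ 3) :=
        ENNReal.ofReal_le_ofReal h1
    _ = (ENNReal.ofReal (5 * R)) ^ (3:ℕ) := ENNReal.ofReal_pow h0 3
    _ = (ENNReal.ofReal 5 * ENNReal.ofReal R) ^ (3:ℕ) := by rw [ENNReal.ofReal_mul (by norm_num)]
    _ = 125 * (ENNReal.ofReal R) ^ (3:ℕ) := by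
        rw [mul_pow]
        norm_num [ENNReal.ofReal_ofNat]
    _ = 125 * (ENNReal.ofReal R) ^ (3:ℝ) := by
        rw [show ((3:ℝ)) = ((3:ℕ):ℝ) by norm_num, ENNReal.rpow_natCast]

lemma mult_card_ennreal (R : ℝ) (j : Fin 3 → ℤ) : ((mult R j).card : ℝ≥0∞) ≤ 343 := by
  have h : (mult R j).card ≤ 343 := by exact_mod_cast mult_card_le R j
  exact_mod_cast h

lemma mul_rpow_tail_le {t : ℝ≥0∞} {p : ℝ} (hp : 0 < p) (M c : ℝ≥0∞)
    (ht : t ≤ (c / M) ^ p) : M * t ^ p⁻¹ ≤ c := by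
  have h1 : t ^ p⁻¹ ≤ ((c / M) ^ p) ^ p⁻¹ :=
    ENNReal.rpow_le_rpow ht (by positivity)
  rw [← ENNReal.rpow_mul, mul_inv_cancel₀ hp.ne', ENNReal.rpow_one] at h1
  calc M * t ^ p⁻¹ ≤ M * (c / M) := mul_le_mul_right h1 M
    _ ≤ c := ENNReal.mul_div_le

lemma endgame {f : ℝ → ℝ≥0∞}
    (h : ∀ ε : ℝ≥0∞, ε ≠ 0 → ε ≤ 1 →
      ∃ C : ℝ≥0∞, C ≠ ⊤ ∧ ∀ᶠ R in atTop, f R ≤ (ENNReal.ofReal R)⁻¹ * C + ε / 2) :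
    Tendsto f atTop (𝓝 0) := by
  rw [ENNReal.tendsto_nhds_zero]
  intro ε hε
  set ε' := min ε 1 with hε'
  have hε'0 : ε' ≠ 0 := ne_of_gt (lt_min hε (by norm_num))
  have hε'1 : ε' ≤ 1 := min_le_right _ _
  have hε't : ε' ≠ ⊤ := (lt_of_le_of_lt hε'1 (by norm_num)).ne
  have hc0 : ε' / 2 ≠ 0 := by
    simp [ENNReal.div_eq_zero_iff, hε'0]
  have hct : ε' / 2 ≠ ⊤ := by
    exact (ENNReal.div_lt_top hε't (by norm_num)).ne
  obtain ⟨C, hC, hev⟩ := h ε' hε'0 hε'1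
  set D := C / (ε' / 2) with hD_def
  have hD : D ≠ ⊤ := (ENNReal.div_lt_top hC hc0).ne
  filter_upwards [hev, eventually_ge_atTop (D.toReal + 1), eventually_ge_atTop (1:ℝ)]
    with R h1 h2 h3
  have hX0 : ENNReal.ofReal R ≠ 0 := by
    simp only [ne_eq, ENNReal.ofReal_eq_zero, not_le]; linarith
  have hXt : ENNReal.ofReal R ≠ ⊤ := ENNReal.ofReal_ne_top
  have hX : D ≤ ENNReal.ofReal R := by
    calc D = ENNReal.ofReal D.toReal := (ENNReal.ofReal_toReal hD).symm
      _ ≤ ENNReal.ofReal R := ENNReal.ofReal_le_ofReal (by linarith)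
  have h5 : C ≤ (ε' / 2) * ENNReal.ofReal R := by
    have hCD : C = (ε' / 2) * D := by
      rw [hD_def, ENNReal.mul_div_cancel hc0 hct]
    rw [hCD]
    exact mul_le_mul_right hX _
  have hXC : (ENNReal.ofReal R)⁻¹ * C ≤ ε' / 2 := by
    calc (ENNReal.ofReal R)⁻¹ * C ≤ (ENNReal.ofReal R)⁻¹ * ((ε' / 2) * ENNReal.ofReal R) :=
          mul_le_mul_right h5 _
      _ = (ε' / 2) * ((ENNReal.ofReal R)⁻¹ * ENNReal.ofReal R) := by ring
      _ = ε' / 2 := by rw [ENNReal.inv_mul_cancel hX0 hXt, mul_one]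
  calc f R ≤ (ENNReal.ofReal R)⁻¹ * C + ε' / 2 := h1
    _ ≤ ε' / 2 + ε' / 2 := add_le_add_left hXC _
    _ = ε' := ENNReal.add_halves _
    _ ≤ ε := min_le_left _ _

lemma core1 (u₀ : E3 → E3) {p : ℝ} (hp1 : 1 ≤ p) (hp3 : p ≤ 3/2)
    (F : Finset (Fin 3 → ℤ)) {R : ℝ} (hR : 1 ≤ R) :
    N0R u₀ R ≤ (ENNReal.ofReal R)⁻¹ * (∑ k ∈ F, aInt u₀ k)
      + 125 * (tailSum (aInt u₀) p F) ^ p⁻¹ := by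
  have hp0 : (0:ℝ) < p := lt_of_lt_of_le one_pos hp1
  set X := ENNReal.ofReal R with hX_def
  have hX1 : 1 ≤ X := ENNReal.one_le_ofReal.2 hR
  have hX0 : X ≠ 0 := by
    intro h; rw [h] at hX1; simp at hX1
  have hXt : X ≠ ⊤ := ENNReal.ofReal_ne_top
  have hpinv : (2:ℝ)/3 ≤ p⁻¹ := by
    have h1 : p * p⁻¹ = 1 := mul_inv_cancel₀ hp0.ne'
    nlinarith [inv_pos.2 hp0]
  rw [N0R]
  apply iSup_le
  intro x₀
  set K := cov x₀ (R + 1) with hK_def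
  have hA : (∫⁻ x in ball x₀ R, (‖u₀ x‖₊ : ℝ≥0∞) ^ 2) ≤ ∑ k ∈ K, aInt u₀ k :=
    lintegral_ball_le _ x₀ R
  have hB := split_bound (aInt u₀) hp1 F K
  have hTail : (∑ k ∈ K \ F, aInt u₀ k ^ p) ^ p⁻¹ ≤ (tailSum (aInt u₀) p F) ^ p⁻¹ :=
    ENNReal.rpow_le_rpow (sum_diff_le_tail _ _ _ _) (by positivity)
  have hC : ((K.card : ℝ≥0∞)) ^ (1 - p⁻¹) ≤ 125 * X := by
    have e0 : (0:ℝ) ≤ 1 - p⁻¹ := by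
      have := inv_le_one_of_one_le₀ hp1; linarith
    calc ((K.card : ℝ≥0∞)) ^ (1 - p⁻¹) ≤ (125 * X ^ (3:ℝ)) ^ (1 - p⁻¹) :=
          ENNReal.rpow_le_rpow (cov_card_ennreal x₀ hR) e0
      _ = (125:ℝ≥0∞) ^ (1 - p⁻¹) * (X ^ (3:ℝ)) ^ (1 - p⁻¹) :=
          ENNReal.mul_rpow_of_nonneg _ _ e0
      _ = (125:ℝ≥0∞) ^ (1 - p⁻¹) * X ^ ((3:ℝ) * (1 - p⁻¹)) := by
          rw [← ENNReal.rpow_mul]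
      _ ≤ (125:ℝ≥0∞) ^ (1:ℝ) * X ^ (1:ℝ) := by
          apply mul_le_mul'
          · exact ENNReal.rpow_le_rpow_of_exponent_le (by norm_num) (by linarith)
          · exact ENNReal.rpow_le_rpow_of_exponent_le hX1 (by linarith)
      _ = 125 * X := by rw [ENNReal.rpow_one, ENNReal.rpow_one]
  have hcomb : (∫⁻ x in ball x₀ R, (‖u₀ x‖₊ : ℝ≥0∞) ^ 2)
      ≤ (∑ k ∈ F, aInt u₀ k) + (125 * X) * (tailSum (aInt u₀) p F) ^ p⁻¹ := by
    refine hA.trans (hB.trans (add_le_add_right ?_ _))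
    exact mul_le_mul' hC hTail
  calc X⁻¹ * (∫⁻ x in ball x₀ R, (‖u₀ x‖₊ : ℝ≥0∞) ^ 2)
      ≤ X⁻¹ * ((∑ k ∈ F, aInt u₀ k) + (125 * X) * (tailSum (aInt u₀) p F) ^ p⁻¹) :=
        mul_le_mul_right hcomb _
    _ = X⁻¹ * (∑ k ∈ F, aInt u₀ k)
        + (125 * (tailSum (aInt u₀) p F) ^ p⁻¹) * (X⁻¹ * X) := by ring
    _ = X⁻¹ * (∑ k ∈ F, aInt u₀ k) + 125 * (tailSum (aInt u₀) p F) ^ p⁻¹ := by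
        rw [ENNReal.inv_mul_cancel hX0 hXt, mul_one]

lemma add_rpow_le2 {p : ℝ} (hp : 0 ≤ p) (u v : ℝ≥0∞) :
    (u + v) ^ p ≤ (2:ℝ≥0∞) ^ p * (u ^ p + v ^ p) := by
  have h1 : u + v ≤ 2 * (u ⊔ v) := by
    rw [two_mul]
    exact add_le_add le_sup_left le_sup_right
  have h2 : (u ⊔ v) ^ p ≤ u ^ p + v ^ p := by
    rcases le_total u v with h | h
    · rw [sup_eq_right.2 h]; exact le_add_self
    · rw [sup_eq_left.2 h]; exact le_self_add
  calc (u + v) ^ p ≤ (2 * (u ⊔ v)) ^ p := ENNReal.rpow_le_rpow h1 hp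
    _ = (2:ℝ≥0∞) ^ p * (u ⊔ v) ^ p := ENNReal.mul_rpow_of_nonneg _ _ hp
    _ ≤ (2:ℝ≥0∞) ^ p * (u ^ p + v ^ p) := mul_le_mul_right h2 _

lemma core2 (u₀ : E3 → E3) {p : ℝ} (hp1 : 1 ≤ p) (hp3 : p ≤ 3)
    (F : Finset (Fin 3 → ℤ)) {R : ℝ} (hR : 1 ≤ R) :
    (ENNReal.ofReal R)⁻¹ * ((ENNReal.ofReal R)⁻¹ *
        (∑' k : Fin 3 → ℤ, (∫⁻ x in ball (R • zc k) R, (‖u₀ x‖₊ : ℝ≥0∞) ^ 2) ^ p) ^ p⁻¹)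
      ≤ (ENNReal.ofReal R)⁻¹ *
          (2 * (((F.card : ℝ≥0∞) * 343) * (∑ k ∈ F, aInt u₀ k) ^ p) ^ p⁻¹)
        + 85750 * (tailSum (aInt u₀) p F) ^ p⁻¹ := by
  have hp0 : (0:ℝ) < p := lt_of_lt_of_le one_pos hp1
  have hpi1 : p⁻¹ ≤ 1 := inv_le_one_of_one_le₀ hp1
  have hpi0 : (0:ℝ) ≤ p⁻¹ := by positivity
  set X := ENNReal.ofReal R with hX_def
  have hX1 : 1 ≤ X := ENNReal.one_le_ofReal.2 hR
  have hX0 : X ≠ 0 := by intro h; rw [h] at hX1; simp at hX1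
  have hXt : X ≠ ⊤ := ENNReal.ofReal_ne_top
  set a := aInt u₀ with ha_def
  set T := tailSum a p F with hT_def
  set CF := ∑ k ∈ F, a k with hCF_def
  set C₂ := ((F.card : ℝ≥0∞) * 343) * CF ^ p with hC2_def
  set u : (Fin 3 → ℤ) → ℝ≥0∞ := fun k => ∑ j ∈ cov (R • zc k) (R + 1) ∩ F, a j with hu_def
  set v : (Fin 3 → ℤ) → ℝ≥0∞ := fun k => ∑ j ∈ cov (R • zc k) (R + 1) \ F, a j with hv_def
  -- pointwise bound
  have h1 : ∀ k : Fin 3 → ℤ,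
      (∫⁻ x in ball (R • zc k) R, (‖u₀ x‖₊ : ℝ≥0∞) ^ 2) ^ p
        ≤ (2:ℝ≥0∞) ^ p * (u k ^ p + v k ^ p) := by
    intro k
    have hi : (∫⁻ x in ball (R • zc k) R, (‖u₀ x‖₊ : ℝ≥0∞) ^ 2) ≤ u k + v k := by
      calc (∫⁻ x in ball (R • zc k) R, (‖u₀ x‖₊ : ℝ≥0∞) ^ 2)
          ≤ ∑ j ∈ cov (R • zc k) (R + 1), a j := lintegral_ball_le _ _ R
        _ = u k + v k := (Finset.sum_inter_add_sum_sdiff _ _ _).symm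
    calc (∫⁻ x in ball (R • zc k) R, (‖u₀ x‖₊ : ℝ≥0∞) ^ 2) ^ p
        ≤ (u k + v k) ^ p := ENNReal.rpow_le_rpow hi hp0.le
      _ ≤ (2:ℝ≥0∞) ^ p * (u k ^ p + v k ^ p) := add_rpow_le2 hp0.le _ _
  -- sum of u-part
  have h3 : ∑' k, u k ^ p ≤ C₂ := by
    set G := F.biUnion (mult R) with hG_def
    have hvan : ∀ k ∉ G, u k ^ p = 0 := by
      intro k hk
      have hempty : cov (R • zc k) (R + 1) ∩ F = ∅ := by
        rw [Finset.eq_empty_iff_forall_notMem]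
        intro j hj
        rcases Finset.mem_inter.1 hj with ⟨hj1, hj2⟩
        exact hk (Finset.mem_biUnion.2 ⟨j, hj2, mem_mult_of_mem_cov hR hj1⟩)
      have : u k = 0 := by rw [hu_def]; simp [hempty]
      rw [this, ENNReal.zero_rpow_of_pos hp0]
    have hGcard : (G.card : ℝ≥0∞) ≤ (F.card : ℝ≥0∞) * 343 := by
      calc (G.card : ℝ≥0∞) ≤ ((∑ j ∈ F, (mult R j).card : ℕ) : ℝ≥0∞) := by
            exact_mod_cast Nat.cast_le.2 Finset.card_biUnion_le
        _ = ∑ j ∈ F, ((mult R j).card : ℝ≥0∞) := by push_cast; rfl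
        _ ≤ ∑ _j ∈ F, (343:ℝ≥0∞) := Finset.sum_le_sum fun j _ => mult_card_ennreal R j
        _ = (F.card : ℝ≥0∞) * 343 := by rw [Finset.sum_const, nsmul_eq_mul]
    calc ∑' k, u k ^ p = ∑ k ∈ G, u k ^ p := tsum_eq_sum hvan
      _ ≤ ∑ _k ∈ G, CF ^ p := Finset.sum_le_sum fun k _ =>
          ENNReal.rpow_le_rpow (Finset.sum_le_sum_of_subset Finset.inter_subset_right) hp0.le
      _ = (G.card : ℝ≥0∞) * CF ^ p := by rw [Finset.sum_const, nsmul_eq_mul]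
      _ ≤ C₂ := mul_le_mul_left hGcard _
  -- sum of v-part
  have hswap : (∑' k, ∑ j ∈ cov (R • zc k) (R + 1) \ F, a j ^ p) ≤ 343 * T := by
    set g : (Fin 3 → ℤ) → (Fin 3 → ℤ) → ℝ≥0∞ :=
      fun k j => if j ∈ cov (R • zc k) (R + 1) \ F then a j ^ p else 0 with hg_def
    have e1 : ∀ k, ∑ j ∈ cov (R • zc k) (R + 1) \ F, a j ^ p = ∑' j, g k j := by
      intro k
      rw [tsum_eq_sum (s := cov (R • zc k) (R + 1) \ F) (fun j hj => if_neg hj)]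
      exact Finset.sum_congr rfl fun j hj => (if_pos hj).symm
    have e2 : ∀ j, (∑' k, g k j)
        ≤ 343 * Set.indicator {j : Fin 3 → ℤ | j ∉ F} (fun j => a j ^ p) j := by
      intro j
      have hvan : ∀ k ∉ mult R j, g k j = 0 := by
        intro k hk
        rw [hg_def]
        simp only
        apply if_neg
        intro hmem
        exact hk (mem_mult_of_mem_cov hR (Finset.mem_sdiff.1 hmem).1)
      have hle : ∀ k ∈ mult R j,
          g k j ≤ Set.indicator {j : Fin 3 → ℤ | j ∉ F} (fun j => a j ^ p) j := by
        intro k _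
        rw [hg_def]
        simp only
        split_ifs with h
        · rw [Set.indicator_of_mem]
          exact (Finset.mem_sdiff.1 h).2
        · exact zero_le
      calc (∑' k, g k j) = ∑ k ∈ mult R j, g k j := tsum_eq_sum hvan
        _ ≤ ∑ _k ∈ mult R j, Set.indicator {j : Fin 3 → ℤ | j ∉ F} (fun j => a j ^ p) j :=
            Finset.sum_le_sum hle
        _ = ((mult R j).card : ℝ≥0∞) *
              Set.indicator {j : Fin 3 → ℤ | j ∉ F} (fun j => a j ^ p) j := by
            rw [Finset.sum_const, nsmul_eq_mul]
        _ ≤ 343 * Set.indicator {j : Fin 3 → ℤ | j ∉ F} (fun j => a j ^ p) j :=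
            mul_le_mul_left (mult_card_ennreal R j) _
    calc (∑' k, ∑ j ∈ cov (R • zc k) (R + 1) \ F, a j ^ p)
        = ∑' k, ∑' j, g k j := tsum_congr e1
      _ = ∑' j, ∑' k, g k j := ENNReal.tsum_comm
      _ ≤ ∑' j, 343 * Set.indicator {j : Fin 3 → ℤ | j ∉ F} (fun j => a j ^ p) j :=
          Summable.tsum_le_tsum e2 ENNReal.summable ENNReal.summable
      _ = 343 * T := by rw [ENNReal.tsum_mul_left]; rfl
  have h4 : ∑' k, v k ^ p ≤ (125 * X ^ (3:ℝ)) ^ (p - 1) * (343 * T) := by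
    have hpm1 : (0:ℝ) ≤ p - 1 := by linarith
    have h41 : ∀ k, v k ^ p
        ≤ (125 * X ^ (3:ℝ)) ^ (p - 1) * ∑ j ∈ cov (R • zc k) (R + 1) \ F, a j ^ p := by
      intro k
      have hcard : (((cov (R • zc k) (R + 1) \ F).card : ℝ≥0∞)) ^ (p - 1)
          ≤ (125 * X ^ (3:ℝ)) ^ (p - 1) := by
        apply ENNReal.rpow_le_rpow _ hpm1
        calc (((cov (R • zc k) (R + 1) \ F).card : ℝ≥0∞))
            ≤ ((cov (R • zc k) (R + 1)).card : ℝ≥0∞) := by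
              exact_mod_cast Nat.cast_le.2 (Finset.card_le_card Finset.sdiff_subset)
          _ ≤ 125 * X ^ (3:ℝ) := cov_card_ennreal _ hR
      calc v k ^ p ≤ (((cov (R • zc k) (R + 1) \ F).card : ℝ≥0∞)) ^ (p - 1) *
            ∑ j ∈ cov (R • zc k) (R + 1) \ F, a j ^ p :=
            ENNReal.rpow_sum_le_const_mul_sum_rpow _ _ hp1
        _ ≤ (125 * X ^ (3:ℝ)) ^ (p - 1) * ∑ j ∈ cov (R • zc k) (R + 1) \ F, a j ^ p :=
            mul_le_mul_left hcard _
    calc ∑' k, v k ^ p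
        ≤ ∑' k, (125 * X ^ (3:ℝ)) ^ (p - 1) * ∑ j ∈ cov (R • zc k) (R + 1) \ F, a j ^ p :=
          Summable.tsum_le_tsum h41 ENNReal.summable ENNReal.summable
      _ = (125 * X ^ (3:ℝ)) ^ (p - 1) * ∑' k, ∑ j ∈ cov (R • zc k) (R + 1) \ F, a j ^ p :=
          ENNReal.tsum_mul_left
      _ ≤ (125 * X ^ (3:ℝ)) ^ (p - 1) * (343 * T) := mul_le_mul_right hswap _
  -- combine sums
  have h2 : (∑' k : Fin 3 → ℤ, (∫⁻ x in ball (R • zc k) R, (‖u₀ x‖₊ : ℝ≥0∞) ^ 2) ^ p)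
      ≤ (2:ℝ≥0∞) ^ p * (C₂ + (125 * X ^ (3:ℝ)) ^ (p - 1) * (343 * T)) := by
    calc (∑' k : Fin 3 → ℤ, (∫⁻ x in ball (R • zc k) R, (‖u₀ x‖₊ : ℝ≥0∞) ^ 2) ^ p)
        ≤ ∑' k, (2:ℝ≥0∞) ^ p * (u k ^ p + v k ^ p) :=
          Summable.tsum_le_tsum h1 ENNReal.summable ENNReal.summable
      _ = (2:ℝ≥0∞) ^ p * ((∑' k, u k ^ p) + ∑' k, v k ^ p) := by
          rw [ENNReal.tsum_mul_left, ENNReal.tsum_add]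
      _ ≤ (2:ℝ≥0∞) ^ p * (C₂ + (125 * X ^ (3:ℝ)) ^ (p - 1) * (343 * T)) :=
          mul_le_mul_right (add_le_add h3 h4) _
  -- take p⁻¹-th root
  have h5 : ((∑' k : Fin 3 → ℤ, (∫⁻ x in ball (R • zc k) R, (‖u₀ x‖₊ : ℝ≥0∞) ^ 2) ^ p)) ^ p⁻¹
      ≤ 2 * (C₂ ^ p⁻¹ + ((125 * X ^ (3:ℝ)) ^ (p - 1) * (343 * T)) ^ p⁻¹) := by
    have h2p : ((2:ℝ≥0∞) ^ p) ^ p⁻¹ = 2 := by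
      rw [← ENNReal.rpow_mul, mul_inv_cancel₀ hp0.ne', ENNReal.rpow_one]
    calc ((∑' k : Fin 3 → ℤ, (∫⁻ x in ball (R • zc k) R, (‖u₀ x‖₊ : ℝ≥0∞) ^ 2) ^ p)) ^ p⁻¹
        ≤ ((2:ℝ≥0∞) ^ p * (C₂ + (125 * X ^ (3:ℝ)) ^ (p - 1) * (343 * T))) ^ p⁻¹ :=
          ENNReal.rpow_le_rpow h2 hpi0
      _ = ((2:ℝ≥0∞) ^ p) ^ p⁻¹ * (C₂ + (125 * X ^ (3:ℝ)) ^ (p - 1) * (343 * T)) ^ p⁻¹ :=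
          ENNReal.mul_rpow_of_nonneg _ _ hpi0
      _ ≤ 2 * (C₂ ^ p⁻¹ + ((125 * X ^ (3:ℝ)) ^ (p - 1) * (343 * T)) ^ p⁻¹) := by
          rw [h2p]
          exact mul_le_mul_right (ENNReal.rpow_add_le_add_rpow _ _ hpi0 hpi1) _
  -- estimate the second root
  have h6 : ((125 * X ^ (3:ℝ)) ^ (p - 1) * (343 * T)) ^ p⁻¹
      ≤ (125 * (X * X)) * (343 * T ^ p⁻¹) := by
    have he : (p - 1) * p⁻¹ = 1 - p⁻¹ := by
      field_simp
    have he1 : (p - 1) * p⁻¹ ≤ 1 := by rw [he]; linarith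
    have he0 : (0:ℝ) ≤ (p - 1) * p⁻¹ := by
      have : (0:ℝ) ≤ p - 1 := by linarith
      positivity
    have he2 : (3:ℝ) * ((p - 1) * p⁻¹) ≤ 2 := by
      rw [he]
      have h1 : p * p⁻¹ = 1 := mul_inv_cancel₀ hp0.ne'
      nlinarith [inv_pos.2 hp0]
    calc ((125 * X ^ (3:ℝ)) ^ (p - 1) * (343 * T)) ^ p⁻¹
        = ((125 * X ^ (3:ℝ)) ^ (p - 1)) ^ p⁻¹ * (343 * T) ^ p⁻¹ :=
          ENNReal.mul_rpow_of_nonneg _ _ hpi0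
      _ = (125 * X ^ (3:ℝ)) ^ ((p - 1) * p⁻¹) * ((343:ℝ≥0∞) ^ p⁻¹ * T ^ p⁻¹) := by
          rw [← ENNReal.rpow_mul, ENNReal.mul_rpow_of_nonneg _ _ hpi0]
      _ = ((125:ℝ≥0∞) ^ ((p - 1) * p⁻¹) * X ^ ((3:ℝ) * ((p - 1) * p⁻¹))) *
            ((343:ℝ≥0∞) ^ p⁻¹ * T ^ p⁻¹) := by
          rw [ENNReal.mul_rpow_of_nonneg _ _ he0, ← ENNReal.rpow_mul]
      _ ≤ ((125:ℝ≥0∞) ^ (1:ℝ) * X ^ (2:ℝ)) * ((343:ℝ≥0∞) ^ (1:ℝ) * T ^ p⁻¹) := by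
          apply mul_le_mul'
          · exact mul_le_mul' (ENNReal.rpow_le_rpow_of_exponent_le (by norm_num) he1)
              (ENNReal.rpow_le_rpow_of_exponent_le hX1 he2)
          · exact mul_le_mul' (ENNReal.rpow_le_rpow_of_exponent_le (by norm_num) hpi1) le_rfl
      _ = (125 * (X * X)) * (343 * T ^ p⁻¹) := by
          rw [ENNReal.rpow_one, ENNReal.rpow_one,
            show ((2:ℝ)) = ((2:ℕ):ℝ) by norm_num, ENNReal.rpow_natCast, sq]
  -- final assembly
  calc X⁻¹ * (X⁻¹ *
        ((∑' k : Fin 3 → ℤ, (∫⁻ x in ball (R • zc k) R, (‖u₀ x‖₊ : ℝ≥0∞) ^ 2) ^ p)) ^ p⁻¹)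
      ≤ X⁻¹ * (X⁻¹ * (2 * (C₂ ^ p⁻¹ + (125 * (X * X)) * (343 * T ^ p⁻¹)))) := by
        apply mul_le_mul_right
        apply mul_le_mul_right
        exact h5.trans (mul_le_mul_right (add_le_add_right h6 _) _)
    _ = (X⁻¹ * X⁻¹) * (2 * C₂ ^ p⁻¹) +
          ((X⁻¹ * X) * (X⁻¹ * X)) * ((2 * 125 * 343) * T ^ p⁻¹) := by ring
    _ ≤ X⁻¹ * (2 * C₂ ^ p⁻¹) + 85750 * T ^ p⁻¹ := by
        rw [ENNReal.inv_mul_cancel hX0 hXt]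
        apply add_le_add
        · apply mul_le_mul_left
          calc X⁻¹ * X⁻¹ ≤ 1 * X⁻¹ := mul_le_mul_left (ENNReal.inv_le_one.2 hX1) _
            _ = X⁻¹ := one_mul _
        · apply le_of_eq
          norm_num

/-- Lemma 2.2, consequences: for `u₀ ∈ E²_q`:
if `2 ≤ q ≤ 3` then `N⁰_R(u₀) → 0` as `R → ∞`, and if `2 ≤ q ≤ 6` then
`R⁻¹ N⁰_{q,R}(u₀) → 0` as `R → ∞`. -/
theorem N0R_and_N0q_tendsto_zero (q : ℝ) (hq : 2 ≤ q)
    (u₀ : E3 → E3) (hmeas : Measurable u₀) (hfin : e2qNorm q u₀ < ⊤) :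
    (q ≤ 3 → Tendsto (fun R : ℝ => N0R u₀ R) atTop (nhds 0)) ∧
    (q ≤ 6 → Tendsto (fun R : ℝ => (ENNReal.ofReal R)⁻¹ * N0q q R u₀) atTop (nhds 0)) := by
  have hq0 : (0:ℝ) < q := by linarith
  have hp1 : 1 ≤ q / 2 := by linarith
  have hp0 : (0:ℝ) < q / 2 := by linarith
  have hS : (∑' k, aInt u₀ k ^ (q / 2)) ≠ ⊤ := by
    intro hcon
    rw [e2qNorm] at hfin
    have hc2 : (∑' k : Fin 3 → ℤ,
        (∫⁻ x in ball (zc k) 1, (‖u₀ x‖₊ : ℝ≥0∞) ^ 2) ^ (q / 2)) = ⊤ := hcon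
    rw [hc2, ENNReal.top_rpow_of_pos (by positivity)] at hfin
    exact lt_irrefl _ hfin
  have haf : ∀ k, aInt u₀ k ≠ ⊤ := by
    intro k hk
    apply hS
    have h1 : aInt u₀ k ^ (q / 2) ≤ ∑' k, aInt u₀ k ^ (q / 2) := ENNReal.le_tsum k
    rw [hk, ENNReal.top_rpow_of_pos hp0] at h1
    exact top_le_iff.1 h1
  have hCF : ∀ F : Finset (Fin 3 → ℤ), (∑ k ∈ F, aInt u₀ k) ≠ ⊤ := fun F =>
    (ENNReal.sum_lt_top.2 fun k _ => lt_top_iff_ne_top.2 (haf k)).ne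
  have hεt : ∀ ε : ℝ≥0∞, ε ≤ 1 → ε ≠ ⊤ := fun ε hε =>
    (lt_of_le_of_lt hε ENNReal.one_lt_top).ne
  have hδgen : ∀ (M : ℝ≥0∞) (ε : ℝ≥0∞), M ≠ 0 → M ≠ ⊤ → ε ≠ 0 → ε ≤ 1 →
      ((ε / 2) / M) ^ (q / 2) ≠ 0 := by
    intro M ε hM0 hMt hε0 hε1
    have hb0 : (ε / 2) / M ≠ 0 := by
      simp [ENNReal.div_eq_zero_iff, hε0, hMt]
    have hbt : (ε / 2) / M ≠ ⊤ :=
      (ENNReal.div_lt_top (ENNReal.div_lt_top (hεt ε hε1) (by norm_num)).ne hM0).ne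
    exact (ENNReal.rpow_pos (pos_iff_ne_zero.2 hb0) hbt).ne'
  constructor
  · intro hq3
    apply endgame
    intro ε hε0 hε1
    obtain ⟨F, hF⟩ := tail_small (aInt u₀) (q / 2) hS
      (hδgen 125 ε (by norm_num) (by norm_num) hε0 hε1)
    refine ⟨∑ k ∈ F, aInt u₀ k, hCF F, ?_⟩
    filter_upwards [eventually_ge_atTop (1:ℝ)] with R hR
    calc N0R u₀ R ≤ (ENNReal.ofReal R)⁻¹ * (∑ k ∈ F, aInt u₀ k)
          + 125 * (tailSum (aInt u₀) (q / 2) F) ^ (q / 2)⁻¹ :=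
          core1 u₀ hp1 (by linarith) F hR
      _ ≤ (ENNReal.ofReal R)⁻¹ * (∑ k ∈ F, aInt u₀ k) + ε / 2 :=
          add_le_add_right (mul_rpow_tail_le hp0 125 (ε / 2) hF) _
  · intro hq6
    apply endgame
    intro ε hε0 hε1
    obtain ⟨F, hF⟩ := tail_small (aInt u₀) (q / 2) hS
      (hδgen 85750 ε (by norm_num) (by norm_num) hε0 hε1)
    refine ⟨2 * (((F.card : ℝ≥0∞) * 343) * (∑ k ∈ F, aInt u₀ k) ^ (q / 2)) ^ (q / 2)⁻¹, ?_, ?_⟩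
    · apply ENNReal.mul_ne_top (by norm_num)
      apply ENNReal.rpow_ne_top_of_nonneg (by positivity)
      apply ENNReal.mul_ne_top
      · exact ENNReal.mul_ne_top (ENNReal.natCast_ne_top _) (by norm_num)
      · exact ENNReal.rpow_ne_top_of_nonneg hp0.le (hCF F)
    · filter_upwards [eventually_ge_atTop (1:ℝ)] with R hR
      have hA : (ENNReal.ofReal R)⁻¹ * N0q q R u₀
          = (ENNReal.ofReal R)⁻¹ * ((ENNReal.ofReal R)⁻¹ *
              (∑' k : Fin 3 → ℤ,
                (∫⁻ x in ball (R • zc k) R, (‖u₀ x‖₊ : ℝ≥0∞) ^ 2) ^ (q / 2)) ^ (q / 2)⁻¹) := by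
        rw [N0q, A0q, inv_div]
      rw [hA]
      calc (ENNReal.ofReal R)⁻¹ * ((ENNReal.ofReal R)⁻¹ *
              (∑' k : Fin 3 → ℤ,
                (∫⁻ x in ball (R • zc k) R, (‖u₀ x‖₊ : ℝ≥0∞) ^ 2) ^ (q / 2)) ^ (q / 2)⁻¹)
          ≤ (ENNReal.ofReal R)⁻¹ *
              (2 * (((F.card : ℝ≥0∞) * 343) * (∑ k ∈ F, aInt u₀ k) ^ (q / 2)) ^ (q / 2)⁻¹)
            + 85750 * (tailSum (aInt u₀) (q / 2) F) ^ (q / 2)⁻¹ :=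
            core2 u₀ hp1 (by linarith) F hR
        _ ≤ (ENNReal.ofReal R)⁻¹ *
              (2 * (((F.card : ℝ≥0∞) * 343) * (∑ k ∈ F, aInt u₀ k) ^ (q / 2)) ^ (q / 2)⁻¹)
            + ε / 2 :=
            add_le_add_right (mul_rpow_tail_le hp0 85750 (ε / 2) hF) _

end
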